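/- Define c_n = Σ_{k≥1} (2^{k+1}−1)·2^{-k}·P(φ^W_{−k} = n) for n ≥ 1. Then for 0 < z < 1, Σ_{n≥1} c_n z^n = 2(1−w)/w − (1−w)/(1+w), where w = w(z) = 1 − (1 − √(1−z²))/z, and consequently lim_{z↑1} √(1−z) · Σ_{n≥1} c_n z^n = √2. -/

import Mathlib

open MeasureTheory Set Filter
open scoped ENNReal

noncomputable section

/-- The sample space of coin flips: `{−1,1}^ℕ`, coded by `Bool` (`true` ↦ `+1`). -/
abbrev Om : Type := ℕ → Bool

/-- The simple symmetric random walk `W_n = ε₁ + ⋯ + ε_n` with `ε_i = ±1`. -/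
def W (ω : Om) (n : ℕ) : ℤ := ∑ i ∈ Finset.range n, (if ω i then (1:ℤ) else -1)

/-- The event `{φ^W_{-k} = n}`: the first hitting time of `-k` by the walk equals `n`. -/
def hitW (k n : ℕ) : Set Om :=
  {ω : Om | W ω n = -(k:ℤ) ∧ ∀ m : ℕ, 1 ≤ m → m < n → W ω m ≠ -(k:ℤ)}

/-- `c_n = ∑_{k≥1} (2^{k+1}-1)·2^{-k}·P(φ^W_{-k} = n)` (as a real number). -/
def cReal (P : Measure Om) (n : ℕ) : ℝ :=
  ∑' k : ℕ, ((2:ℝ)^(k+2) - 1) * (1/2)^(k+1) * (P (hitW (k+1) n)).toReal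

/-!
Splitting a path at its first visit to `-1` writes `φ_{-(k+1)}` as `φ_{-1}` plus an independent
copy of `φ_{-k}`, so `E z^{φ_{-k}} = g^k` with `g = E z^{φ_{-1}}`. The first step gives
`g = z (1 + g²) / 2`, and `g ≤ z` selects the root `g = (1 - √(1 - z²)) / z`. Then
`∑ c_n z^n = ∑_k (2 - 2^{-k}) g^k = 2g/(1-g) - g/(2-g)`, which is the formula with `w = 1 - g`;
since `w ~ √(2(1 - z))` as `z ↑ 1`, the limit follows.

Probabilities are computed by counting: an event determined by the first `n` flips has
probability `#(paths in it) / 2^n`.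
-/

open scoped Classical Finset
open Finset.HasAntidiagonal

def truncAt (m : ℕ) (ω : Om) : Om := fun i => if i < m then ω i else false

def dropAt (m : ℕ) (ω : Om) : Om := fun i => ω (m + i)

def concatAt (m : ℕ) (a b : Om) : Om := fun i => if i < m then a i else b (i - m)

lemma W_zero (ω : Om) : W ω 0 = 0 := Finset.sum_range_zero _

lemma W_one (ω : Om) : W ω 1 = if ω 0 then 1 else -1 := Finset.sum_range_one _

lemma W_succ (ω : Om) (n : ℕ) : W ω (n + 1) = W ω n + if ω n then 1 else -1 :=
  Finset.sum_range_succ _ _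

lemma W_add (ω : Om) (m t : ℕ) : W ω (m + t) = W ω m + W (dropAt m ω) t :=
  Finset.sum_range_add _ _ _

lemma W_congr {ω ω' : Om} {n : ℕ} (h : ∀ i < n, ω i = ω' i) : W ω n = W ω' n :=
  Finset.sum_congr rfl fun i hi => by rw [h i (Finset.mem_range.1 hi)]

lemma exists_W_eq_of_W_le {ω : Om} {c : ℤ} (hc : c ≤ 0) :
    ∀ {n : ℕ}, W ω n ≤ c → ∃ m ≤ n, W ω m = c
  | 0, h => ⟨0, le_rfl, by rw [W_zero] at h ⊢; omega⟩
  | n + 1, h => by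
    by_cases hn : W ω n ≤ c
    · obtain ⟨m, hm, hmc⟩ := exists_W_eq_of_W_le hc hn
      exact ⟨m, by omega, hmc⟩
    · refine ⟨n + 1, le_rfl, ?_⟩
      rw [W_succ] at h ⊢
      split_ifs at h ⊢ <;> omega

lemma hitW_congr {k n : ℕ} {ω ω' : Om} (h : ∀ i < n, ω i = ω' i) :
    ω ∈ hitW k n ↔ ω' ∈ hitW k n := by
  have hW : ∀ m ≤ n, W ω m = W ω' m := fun m hm => W_congr fun i hi => h i (by omega)
  simp only [hitW, mem_ofPred_eq, hW n le_rfl]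
  exact and_congr_right' <| forall_congr' fun m => imp_congr_right fun _ =>
    forall_congr' fun hm => by rw [hW m hm.le]

lemma pairwise_disjoint_hitW {k : ℕ} (hk : k ≠ 0) :
    Pairwise (Function.onFun Disjoint (hitW k)) := by
  have key : ∀ {n n'}, n < n' → Disjoint (hitW k n) (hitW k n') := by
    intro n n' hlt
    refine Set.disjoint_left.2 fun ω ⟨h1, _⟩ ⟨_, h2'⟩ => ?_
    rcases Nat.eq_zero_or_pos n with rfl | hn
    · rw [W_zero] at h1; omega
    · exact h2' n hn hlt h1
  intro n n' hne
  rcases hne.lt_or_gt with h | h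
  exacts [key h, (key h).symm]

lemma exists_mem_hitW_one {K n : ℕ} {ω : Om} (hK : K ≠ 0) (hω : ω ∈ hitW K n) :
    ∃ m ≤ n, ω ∈ hitW 1 m := by
  obtain ⟨m, hmn, hm⟩ := exists_W_eq_of_W_le (c := -1) (by norm_num) (by rw [hω.1]; omega)
  have hex : ∃ m, W ω m = -1 := ⟨m, hm⟩
  refine ⟨Nat.find hex, (Nat.find_min' hex hm).trans hmn, ?_, fun j _ hj => Nat.find_min hex hj⟩
  simpa using Nat.find_spec hex

lemma mem_hitW_add_iff {ω : Om} {m t K k : ℕ} (hk : k ≠ 0) (hlevel : (k : ℤ) = K + W ω m)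
    (hbefore : ∀ i, 1 ≤ i → i ≤ m → W ω i ≠ -K) :
    ω ∈ hitW K (m + t) ↔ dropAt m ω ∈ hitW k t := by
  simp only [hitW, mem_ofPred_eq, W_add]
  rcases Nat.eq_zero_or_pos t with rfl | ht
  · simp only [W_zero, add_zero]
    refine iff_of_false (fun ⟨h1, _⟩ => ?_) (fun ⟨h1, _⟩ => by omega)
    rcases Nat.eq_zero_or_pos m with rfl | hm
    · rw [W_zero] at h1 hlevel; omega
    · exact hbefore m hm le_rfl h1
  constructor
  · rintro ⟨h1, h2⟩
    refine ⟨by omega, fun s hs1 hs2 hs => h2 (m + s) (by omega) (by omega) ?_⟩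
    rw [W_add]; omega
  · rintro ⟨h1, h2⟩
    refine ⟨by omega, fun i hi1 hi2 hi => ?_⟩
    rcases le_or_gt i m with him | him
    · exact hbefore i hi1 him hi
    · obtain ⟨s, rfl⟩ := Nat.exists_eq_add_of_lt him
      rw [add_assoc, W_add] at hi
      exact h2 (s + 1) (by omega) (by omega) (by omega)

lemma mem_hitW_succ_add_iff {ω : Om} {m t k : ℕ} (hk : k ≠ 0) (hω : ω ∈ hitW 1 m) :
    ω ∈ hitW (k + 1) (m + t) ↔ dropAt m ω ∈ hitW k t := by
  obtain ⟨hm, hbefore⟩ := hω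
  refine mem_hitW_add_iff hk (by push_cast at hm ⊢; omega) fun i hi1 hi2 hi => ?_
  -- a visit to `-(k+1)` before time `m` would force an earlier visit to `-1`
  obtain ⟨j, hji, hj⟩ :=
    exists_W_eq_of_W_le (ω := ω) (c := -1) (by norm_num) (n := i) (by push_cast at hi; omega)
  have hj0 : j ≠ 0 := by rintro rfl; rw [W_zero] at hj; omega
  rcases hi2.lt_or_eq with him | rfl
  · exact hbefore j (by omega) (by omega) hj
  · push_cast at hi hm; omega

lemma mem_hitW_one_one_iff {ω : Om} : ω ∈ hitW 1 1 ↔ ω 0 = false := by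
  refine ⟨fun ⟨h, _⟩ => ?_, fun h => ⟨by rw [W_one, h]; rfl, fun m hm1 hm2 => by omega⟩⟩
  rw [W_one] at h
  cases h0 : ω 0 <;> simp [h0] at h ⊢

lemma mem_hitW_one_add_iff {ω : Om} {t : ℕ} (ht : t ≠ 0) :
    ω ∈ hitW 1 (1 + t) ↔ ω 0 = true ∧ dropAt 1 ω ∈ hitW 2 t := by
  cases h0 : ω 0
  · simp only [Bool.false_eq_true, false_and, iff_false]
    rintro ⟨-, hbefore⟩
    exact hbefore 1 le_rfl (by omega) (by rw [W_one, h0]; norm_num)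
  · rw [and_iff_right rfl]
    exact mem_hitW_add_iff two_ne_zero (by rw [W_one, h0]; norm_num) fun i hi1 hi2 => by
      rw [show i = 1 by omega, W_one, h0]; norm_num

/-- One representative of each cylinder of length `n`. -/
def paths (n : ℕ) : Finset Om :=
  Finset.univ.image fun (f : Fin n → Bool) (i : ℕ) => if h : i < n then f ⟨i, h⟩ else false

lemma mem_paths {n : ℕ} {ω : Om} : ω ∈ paths n ↔ ∀ i, n ≤ i → ω i = false := by
  simp only [paths, Finset.mem_image, Finset.mem_univ, true_and]
  constructor
  · rintro ⟨f, rfl⟩ i hi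
    simp [Nat.not_lt.2 hi]
  · intro h
    refine ⟨fun i => ω i, funext fun i => ?_⟩
    by_cases hi : i < n
    · simp [hi]
    · simp [hi, h i (Nat.not_lt.1 hi)]

lemma card_paths_le (n : ℕ) : #(paths n) ≤ 2 ^ n :=
  Finset.card_image_le.trans (by simp)

lemma eq_of_mem_paths {n : ℕ} {a b : Om} (ha : a ∈ paths n) (hb : b ∈ paths n)
    (h : ∀ i < n, a i = b i) : a = b := by
  funext i
  by_cases hi : i < n
  · exact h i hi
  · rw [mem_paths.1 ha i (Nat.not_lt.1 hi), mem_paths.1 hb i (Nat.not_lt.1 hi)]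

lemma card_filter_paths_one (b : Bool) : #{ω ∈ paths 1 | ω 0 = b} = 1 := by
  refine Finset.card_eq_one.2 ⟨fun i => if i = 0 then b else false, ?_⟩
  ext ω
  simp only [Finset.mem_filter, mem_paths, Finset.mem_singleton]
  constructor
  · rintro ⟨h, rfl⟩
    funext i
    split_ifs with hi
    · rw [hi]
    · exact h i (by omega)
  · rintro rfl
    exact ⟨fun i hi => by simp [Nat.one_le_iff_ne_zero.1 hi], rfl⟩

lemma truncAt_mem_paths (m : ℕ) (ω : Om) : truncAt m ω ∈ paths m :=
  mem_paths.2 fun i hi => by simp [truncAt, Nat.not_lt.2 hi]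

lemma dropAt_mem_paths {m t : ℕ} {ω : Om} (h : ω ∈ paths (m + t)) : dropAt m ω ∈ paths t :=
  mem_paths.2 fun i hi => mem_paths.1 h (m + i) (by omega)

lemma concatAt_mem_paths {m t : ℕ} (a : Om) {b : Om} (h : b ∈ paths t) :
    concatAt m a b ∈ paths (m + t) :=
  mem_paths.2 fun i hi => by
    simp [concatAt, show ¬ i < m by omega, mem_paths.1 h (i - m) (by omega)]

lemma concatAt_truncAt_dropAt (m : ℕ) (ω : Om) :
    concatAt m (truncAt m ω) (dropAt m ω) = ω := by
  funext i
  by_cases hi : i < m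
  · simp [concatAt, truncAt, hi]
  · simp [concatAt, dropAt, hi, Nat.add_sub_cancel' (Nat.not_lt.1 hi)]

lemma truncAt_concatAt {m : ℕ} {a : Om} (ha : a ∈ paths m) (b : Om) :
    truncAt m (concatAt m a b) = a :=
  eq_of_mem_paths (truncAt_mem_paths m _) ha fun i hi => by simp [truncAt, concatAt, hi]

lemma dropAt_concatAt (m : ℕ) (a b : Om) : dropAt m (concatAt m a b) = b := by
  funext i
  simp [dropAt, concatAt]

lemma card_filter_paths_add (p q : Om → Prop) [DecidablePred p] [DecidablePred q] (m t : ℕ) :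
    #{ω ∈ paths (m + t) | p (truncAt m ω) ∧ q (dropAt m ω)} =
      #{a ∈ paths m | p a} * #{b ∈ paths t | q b} := by
  rw [← Finset.card_product]
  refine Finset.card_bij' (fun ω _ => (truncAt m ω, dropAt m ω)) (fun x _ => concatAt m x.1 x.2)
    ?_ ?_ (fun ω _ => concatAt_truncAt_dropAt m ω) ?_
  · intro ω hω
    simp only [Finset.mem_filter, Finset.mem_product] at hω ⊢
    exact ⟨⟨truncAt_mem_paths m ω, hω.2.1⟩, dropAt_mem_paths hω.1, hω.2.2⟩
  · rintro ⟨a, b⟩ hx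
    simp only [Finset.mem_filter, Finset.mem_product] at hx ⊢
    rw [truncAt_concatAt hx.1.1, dropAt_concatAt]
    exact ⟨concatAt_mem_paths a hx.2.1, hx.1.2, hx.2.2⟩
  · rintro ⟨a, b⟩ hx
    simp only [Finset.mem_filter, Finset.mem_product] at hx
    rw [truncAt_concatAt hx.1.1, dropAt_concatAt]

def hitCount (k n : ℕ) : ℕ := #{ω ∈ paths n | ω ∈ hitW k n}

lemma hitCount_le (k n : ℕ) : hitCount k n ≤ 2 ^ n :=
  (Finset.card_filter_le _ _).trans (card_paths_le n)

lemma hitCount_zero {k : ℕ} (hk : k ≠ 0) : hitCount k 0 = 0 := by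
  refine Finset.card_eq_zero.2 (Finset.filter_eq_empty_iff.2 fun ω _ ⟨h, _⟩ => ?_)
  rw [W_zero] at h
  omega

lemma hitCount_one_one : hitCount 1 1 = 1 := by
  rw [hitCount, Finset.filter_congr fun ω _ => mem_hitW_one_one_iff]
  exact card_filter_paths_one false

lemma hitCount_one_succ {t : ℕ} (ht : t ≠ 0) : hitCount 1 (t + 1) = hitCount 2 t := by
  have hfirst :
      ∀ ω : Om, ω ∈ hitW 1 (1 + t) ↔ truncAt 1 ω 0 = true ∧ dropAt 1 ω ∈ hitW 2 t :=
    fun ω => by rw [mem_hitW_one_add_iff ht]; simp [truncAt]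
  calc hitCount 1 (t + 1)
      = #{ω ∈ paths (1 + t) | truncAt 1 ω 0 = true ∧ dropAt 1 ω ∈ hitW 2 t} := by
        rw [hitCount, add_comm, Finset.filter_congr fun ω _ => hfirst ω]
    _ = #{a ∈ paths 1 | a 0 = true} * hitCount 2 t :=
        card_filter_paths_add (· 0 = true) (· ∈ hitW 2 t) 1 t
    _ = hitCount 2 t := by rw [card_filter_paths_one, one_mul]

lemma filter_hitW_succ_eq_biUnion {k : ℕ} (hk : k ≠ 0) (n : ℕ) :
    {ω ∈ paths n | ω ∈ hitW (k + 1) n} = (antidiagonal n).biUnion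
      fun p => {ω ∈ paths n | ω ∈ hitW 1 p.1 ∧ dropAt p.1 ω ∈ hitW k p.2} := by
  ext ω
  simp only [Finset.mem_filter, Finset.mem_biUnion, Finset.HasAntidiagonal.mem_antidiagonal,
    Prod.exists]
  constructor
  · rintro ⟨hω, hhit⟩
    obtain ⟨m, hmn, hm⟩ := exists_mem_hitW_one (Nat.succ_ne_zero k) hhit
    obtain ⟨t, rfl⟩ := Nat.exists_eq_add_of_le hmn
    exact ⟨m, t, rfl, hω, hm, (mem_hitW_succ_add_iff hk hm).1 hhit⟩
  · rintro ⟨m, t, rfl, hω, hm, ht⟩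
    exact ⟨hω, (mem_hitW_succ_add_iff hk hm).2 ht⟩

lemma hitCount_succ {k : ℕ} (hk : k ≠ 0) (n : ℕ) :
    hitCount (k + 1) n = ∑ p ∈ antidiagonal n, hitCount 1 p.1 * hitCount k p.2 := by
  rw [hitCount, filter_hitW_succ_eq_biUnion hk, Finset.card_biUnion]
  · refine Finset.sum_congr rfl fun ⟨m, t⟩ hp => ?_
    rw [Finset.HasAntidiagonal.mem_antidiagonal] at hp
    subst hp
    rw [hitCount, hitCount, ← card_filter_paths_add (· ∈ hitW 1 m)]
    exact congrArg _ <| Finset.filter_congr fun ω _ =>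
      and_congr_left' (hitW_congr fun i hi => (if_pos hi).symm)
  · intro p hp p' hp' hpp'
    have h1 : p.1 ≠ p'.1 := mt (Finset.HasAntidiagonal.antidiagonal_congr hp hp').2 hpp'
    exact Finset.disjoint_left.2 fun ω hω hω' => Set.disjoint_left.1
      (pairwise_disjoint_hitW one_ne_zero h1) (Finset.mem_filter.1 hω).2.1
      (Finset.mem_filter.1 hω').2.1

/-- `P` is the law of a sequence of independent fair coin flips. -/
def IsFairCoin (P : Measure Om) : Prop :=
  ∀ (n : ℕ) (f : ℕ → Bool), P {ω : Om | ∀ i < n, ω i = f i} = (1/2 : ℝ≥0∞)^n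

lemma IsFairCoin.isProbabilityMeasure {P : Measure Om} (hP : IsFairCoin P) :
    IsProbabilityMeasure P :=
  ⟨by simpa using hP 0 default⟩

lemma measurableSet_cylinder (n : ℕ) (f : Om) :
    MeasurableSet {ω : Om | ∀ i < n, ω i = f i} := by
  simp only [ofPred_forall]
  exact .iInter fun i => .iInter fun _ =>
    measurableSet_eq_fun (measurable_pi_apply i) measurable_const

lemma eq_biUnion_cylinder {n : ℕ} {S : Set Om}
    (hS : ∀ ω ω' : Om, (∀ i < n, ω i = ω' i) → ω ∈ S → ω' ∈ S) :
    S = ⋃ f ∈ {f ∈ paths n | f ∈ S}, {ω : Om | ∀ i < n, ω i = f i} := by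
  ext ω
  simp only [mem_iUnion, Finset.mem_filter, exists_prop, mem_ofPred_eq]
  have htrunc : ∀ i < n, ω i = truncAt n ω i := fun i hi => (if_pos hi).symm
  refine ⟨fun hω => ⟨truncAt n ω, ⟨truncAt_mem_paths n ω, hS ω _ htrunc hω⟩, htrunc⟩,
    ?_⟩
  rintro ⟨f, ⟨-, hf⟩, hω⟩
  exact hS f ω (fun i hi => (hω i hi).symm) hf

lemma measurableSet_of_depends_on_prefix {n : ℕ} {S : Set Om}
    (hS : ∀ ω ω' : Om, (∀ i < n, ω i = ω' i) → ω ∈ S → ω' ∈ S) :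
    MeasurableSet S := by
  rw [eq_biUnion_cylinder hS]
  exact Finset.measurableSet_biUnion _ fun f _ => measurableSet_cylinder n f

lemma IsFairCoin.measure_eq_card_mul {P : Measure Om} (hP : IsFairCoin P) {n : ℕ} {S : Set Om}
    (hS : ∀ ω ω' : Om, (∀ i < n, ω i = ω' i) → ω ∈ S → ω' ∈ S) :
    P S = #{f ∈ paths n | f ∈ S} * (1/2 : ℝ≥0∞)^n := by
  conv_lhs => rw [eq_biUnion_cylinder hS]
  rw [measure_biUnion_finset, Finset.sum_congr rfl fun f _ => hP n f,
    Finset.sum_const, nsmul_eq_mul]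
  · intro f hf g hg hfg
    refine Set.disjoint_left.2 fun ω hωf hωg => hfg ?_
    exact eq_of_mem_paths (Finset.mem_filter.1 hf).1 (Finset.mem_filter.1 hg).1
      fun i hi => (hωf i hi).symm.trans (hωg i hi)
  · exact fun f _ => measurableSet_cylinder n f

lemma measurableSet_hitW (k n : ℕ) : MeasurableSet (hitW k n) :=
  measurableSet_of_depends_on_prefix fun _ _ h => (hitW_congr h).1

/-- `P(φ_{-k} = n)`. -/
def hitProb (k n : ℕ) : ℝ := hitCount k n * (1/2)^n

lemma IsFairCoin.toReal_measure_hitW {P : Measure Om} (hP : IsFairCoin P) (k n : ℕ) :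
    (P (hitW k n)).toReal = hitProb k n := by
  rw [hP.measure_eq_card_mul fun _ _ h => (hitW_congr h).1, ENNReal.toReal_mul,
    ENNReal.toReal_pow]
  simp [hitProb, hitCount]

lemma hitProb_nonneg (k n : ℕ) : 0 ≤ hitProb k n := by
  unfold hitProb; positivity

lemma hitProb_le_one (k n : ℕ) : hitProb k n ≤ 1 := by
  have h : (hitCount k n : ℝ) ≤ 2 ^ n := by exact_mod_cast hitCount_le k n
  rw [hitProb, one_div, inv_pow, ← div_eq_mul_inv]
  exact div_le_one_of_le₀ h (by positivity)

lemma hitProb_zero {k : ℕ} (hk : k ≠ 0) : hitProb k 0 = 0 := by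
  simp [hitProb, hitCount_zero hk]

lemma hitProb_one_one : hitProb 1 1 = 1 / 2 := by
  simp [hitProb, hitCount_one_one]

lemma hitProb_one_succ {t : ℕ} (ht : t ≠ 0) : hitProb 1 (t + 1) = hitProb 2 t / 2 := by
  rw [hitProb, hitProb, hitCount_one_succ ht, pow_succ]
  ring

lemma hitProb_succ {k : ℕ} (hk : k ≠ 0) (n : ℕ) :
    hitProb (k + 1) n = ∑ p ∈ antidiagonal n, hitProb 1 p.1 * hitProb k p.2 := by
  rw [hitProb, hitCount_succ hk, Nat.cast_sum, Finset.sum_mul]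
  refine Finset.sum_congr rfl fun p hp => ?_
  rw [← Finset.HasAntidiagonal.mem_antidiagonal.1 hp, hitProb, hitProb, pow_add]
  push_cast
  ring

lemma IsFairCoin.sum_hitProb_one_le {P : Measure Om} (hP : IsFairCoin P) (N : ℕ) :
    ∑ n ∈ Finset.range N, hitProb 1 n ≤ 1 := by
  have := hP.isProbabilityMeasure
  have hunion : ∑ n ∈ Finset.range N, P (hitW 1 n) ≤ 1 := by
    rw [← measure_biUnion_finset (fun i _ j _ hij => pairwise_disjoint_hitW one_ne_zero hij)
      fun n _ => measurableSet_hitW 1 n]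
    exact prob_le_one
  simp_rw [← hP.toReal_measure_hitW]
  rw [← ENNReal.toReal_sum fun n _ => measure_ne_top P _]
  exact ENNReal.toReal_le_of_le_ofReal zero_le_one (by simpa using hunion)

/-- The generating function `E[z^{φ_{-k}}]`. -/
def hitGF (k : ℕ) (z : ℝ) : ℝ := ∑' n, hitProb k n * z ^ n

lemma summable_norm_hitProb_mul_pow (k : ℕ) {z : ℝ} (hz : ‖z‖ < 1) :
    Summable fun n => ‖hitProb k n * z ^ n‖ :=
  (summable_geometric_of_lt_one (norm_nonneg z) hz).of_nonneg_of_le (fun _ => norm_nonneg _)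
    fun n => by
      rw [norm_mul, norm_pow, Real.norm_of_nonneg (hitProb_nonneg k n)]
      exact mul_le_of_le_one_left (by positivity) (hitProb_le_one k n)

lemma hitGF_nonneg (k : ℕ) {z : ℝ} (hz : 0 ≤ z) : 0 ≤ hitGF k z :=
  tsum_nonneg fun n => mul_nonneg (hitProb_nonneg k n) (pow_nonneg hz n)

lemma hitGF_succ {k : ℕ} (hk : k ≠ 0) {z : ℝ} (hz : ‖z‖ < 1) :
    hitGF (k + 1) z = hitGF 1 z * hitGF k z := by
  rw [hitGF, hitGF, hitGF, tsum_mul_tsum_eq_tsum_sum_antidiagonal_of_summable_norm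
    (summable_norm_hitProb_mul_pow 1 hz) (summable_norm_hitProb_mul_pow k hz)]
  refine tsum_congr fun n => ?_
  rw [hitProb_succ hk, Finset.sum_mul]
  refine Finset.sum_congr rfl fun p hp => ?_
  rw [← Finset.HasAntidiagonal.mem_antidiagonal.1 hp, pow_add]
  ring

lemma hitGF_pow (k : ℕ) {z : ℝ} (hz : ‖z‖ < 1) : hitGF (k + 1) z = hitGF 1 z ^ (k + 1) := by
  induction k with
  | zero => rw [zero_add, pow_one]
  | succ k ih => rw [hitGF_succ k.succ_ne_zero hz, ih, ← pow_succ']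

/-- First-step analysis: `φ_{-1} = 1` or `φ_{-1} = 1 + φ'_{-2}`. -/
lemma hitGF_one_eq_mul_one_add_sq {z : ℝ} (hz : ‖z‖ < 1) :
    hitGF 1 z = z / 2 * (1 + hitGF 1 z ^ 2) := by
  have hsum : ∀ k, Summable fun n => hitProb k n * z ^ n :=
    fun k => (summable_norm_hitProb_mul_pow k hz).of_norm
  have htail : HasSum (fun n => hitProb 1 (n + 2) * z ^ (n + 2)) (z / 2 * hitGF 2 z) := by
    have h := ((hasSum_nat_add_iff' 1).2 (hsum 2).hasSum).mul_left (z / 2)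
    simp only [Finset.sum_range_one, pow_zero, hitProb_zero two_ne_zero, zero_mul,
      sub_zero] at h
    refine h.congr_fun fun n => ?_
    rw [hitProb_one_succ (Nat.succ_ne_zero n)]
    ring
  calc hitGF 1 z = z / 2 * hitGF 2 z + ∑ i ∈ Finset.range 2, hitProb 1 i * z ^ i :=
        ((hasSum_nat_add_iff (f := fun n => hitProb 1 n * z ^ n) 2).1 htail).tsum_eq
    _ = z / 2 * (1 + hitGF 1 z ^ 2) := by
      rw [show hitGF 2 z = hitGF 1 z ^ 2 by rw [← one_add_one_eq_two]; exact hitGF_pow 1 hz]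
      simp [Finset.sum_range_succ, hitProb_zero, hitProb_one_one]
      ring

lemma IsFairCoin.hitGF_one_le {P : Measure Om} (hP : IsFairCoin P) {z : ℝ} (hz0 : 0 ≤ z)
    (hz1 : z ≤ 1) : hitGF 1 z ≤ z := by
  refine Real.tsum_le_of_sum_range_le (fun n => mul_nonneg (hitProb_nonneg 1 n) (pow_nonneg hz0 n))
    fun N => ?_
  have hterm : ∀ n, hitProb 1 n * z ^ n ≤ z * hitProb 1 n := by
    intro n
    rcases Nat.eq_zero_or_pos n with rfl | hn
    · simp [hitProb_zero]
    · rw [mul_comm z]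
      exact mul_le_mul_of_nonneg_left (pow_le_of_le_one hz0 hz1 hn.ne') (hitProb_nonneg 1 n)
  calc ∑ n ∈ Finset.range N, hitProb 1 n * z ^ n
      ≤ z * ∑ n ∈ Finset.range N, hitProb 1 n := by
        rw [Finset.mul_sum]; exact Finset.sum_le_sum fun n _ => hterm n
    _ ≤ z := mul_le_of_le_one_right hz0 (hP.sum_hitProb_one_le N)

/-- Of the two roots `(1 ± √(1 - z²))/z` of `f = z(1 + f²)/2`, `z f < 1` picks the smaller. -/
lemma eq_of_eq_mul_one_add_sq {z f : ℝ} (hz : 0 < z) (hz1 : z ≤ 1)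
    (hf : f = z / 2 * (1 + f ^ 2)) (hzf : z * f < 1) : f = (1 - √(1 - z ^ 2)) / z := by
  have hs : √(1 - z ^ 2) ^ 2 = 1 - z ^ 2 := Real.sq_sqrt (by nlinarith)
  have hs0 : 0 ≤ √(1 - z ^ 2) := Real.sqrt_nonneg _
  have hroots : (z * f - (1 - √(1 - z ^ 2))) * (z * f - (1 + √(1 - z ^ 2))) = 0 := by
    linear_combination (-2 * z) * hf - hs
  rw [eq_div_iff hz.ne']
  rcases mul_eq_zero.1 hroots with h | h <;> nlinarith

/-- `1 - w(z)` in the paper's notation. -/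
def firstPassageGF (z : ℝ) : ℝ := (1 - √(1 - z ^ 2)) / z

lemma IsFairCoin.hitGF_one_eq_firstPassageGF {P : Measure Om} (hP : IsFairCoin P) {z : ℝ}
    (hz : z ∈ Ioo (0 : ℝ) 1) : hitGF 1 z = firstPassageGF z := by
  have hz' : ‖z‖ < 1 := by rw [Real.norm_of_nonneg hz.1.le]; exact hz.2
  refine eq_of_eq_mul_one_add_sq hz.1 hz.2.le (hitGF_one_eq_mul_one_add_sq hz') ?_
  nlinarith [hP.hitGF_one_le hz.1.le hz.2.le, hz.1, hz.2]

lemma cReal_coeff_eq (k : ℕ) :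
    ((2 : ℝ) ^ (k + 2) - 1) * (1/2) ^ (k + 1) = 2 - (1/2) ^ (k + 1) := by
  rw [sub_mul, one_mul, pow_succ 2 (k + 1), one_div, inv_pow, mul_comm _ (2 : ℝ), mul_assoc,
    mul_inv_cancel₀ (by positivity), mul_one]

lemma IsFairCoin.cReal_eq {P : Measure Om} (hP : IsFairCoin P) (n : ℕ) :
    cReal P n = ∑' k : ℕ, (2 - (1/2 : ℝ) ^ (k + 1)) * hitProb (k + 1) n := by
  simp only [cReal, cReal_coeff_eq, hP.toReal_measure_hitW]

lemma hasSum_two_sub_half_pow_mul_pow {g : ℝ} (hg0 : 0 ≤ g) (hg1 : g < 1) :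
    HasSum (fun k : ℕ => (2 - (1/2 : ℝ) ^ (k + 1)) * g ^ (k + 1))
      (2 * g / (1 - g) - g / (2 - g)) := by
  have h1 := (hasSum_geometric_of_lt_one hg0 hg1).mul_left (2 * g)
  have h2 := (hasSum_geometric_of_lt_one (by linarith : 0 ≤ g / 2)
    (by linarith : g / 2 < 1)).mul_left (g / 2)
  have h1g : 1 - g ≠ 0 := by linarith
  have h2g : 2 - g ≠ 0 := by linarith
  have hsum : 2 * g * (1 - g)⁻¹ - g / 2 * (1 - g / 2)⁻¹ = 2 * g / (1 - g) - g / (2 - g) := by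
    field_simp
  rw [← hsum]
  exact (h1.sub h2).congr_fun fun k => by ring

lemma IsFairCoin.tsum_cReal_mul_pow {P : Measure Om} (hP : IsFairCoin P) {z : ℝ}
    (hz : z ∈ Ioo (0 : ℝ) 1) :
    ∑' n, cReal P (n + 1) * z ^ (n + 1) =
      2 * hitGF 1 z / (1 - hitGF 1 z) - hitGF 1 z / (2 - hitGF 1 z) := by
  have hz' : ‖z‖ < 1 := by rw [Real.norm_of_nonneg hz.1.le]; exact hz.2
  set g := hitGF 1 z
  have hg0 : 0 ≤ g := hitGF_nonneg 1 hz.1.le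
  have hg1 : g < 1 := (hP.hitGF_one_le hz.1.le hz.2.le).trans_lt hz.2
  have hcoeff : ∀ k : ℕ, 0 ≤ 2 - (1/2 : ℝ) ^ (k + 1) := fun k => by
    have : (1/2 : ℝ) ^ (k + 1) ≤ 1 := pow_le_one₀ (by norm_num) (by norm_num)
    linarith
  set f : ℕ × ℕ → ℝ := fun p =>
    (2 - (1/2 : ℝ) ^ (p.1 + 1)) * hitProb (p.1 + 1) (p.2 + 1) * z ^ (p.2 + 1)
  have hfiber : ∀ k, HasSum (fun n => f (k, n)) ((2 - (1/2 : ℝ) ^ (k + 1)) * g ^ (k + 1)) := by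
    intro k
    rw [← hitGF_pow k hz']
    have h := ((hasSum_nat_add_iff' 1).2 (summable_norm_hitProb_mul_pow (k + 1) hz').of_norm.hasSum
      ).mul_left (2 - (1/2 : ℝ) ^ (k + 1))
    simp only [Finset.sum_range_one, pow_zero, hitProb_zero k.succ_ne_zero, zero_mul,
      sub_zero] at h
    exact h.congr_fun fun n => mul_assoc _ _ _
  have hf : Summable f := by
    refine (summable_prod_of_nonneg fun p => ?_).2 ⟨fun k => (hfiber k).summable, ?_⟩
    · exact mul_nonneg (mul_nonneg (hcoeff _) (hitProb_nonneg _ _)) (pow_nonneg hz.1.le _)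
    · simpa only [(hfiber _).tsum_eq] using (hasSum_two_sub_half_pow_mul_pow hg0 hg1).summable
  calc ∑' n, cReal P (n + 1) * z ^ (n + 1) = ∑' n, ∑' k, f (k, n) :=
        tsum_congr fun n => by rw [hP.cReal_eq, ← tsum_mul_right]
    _ = ∑' k, ∑' n, f (k, n) := hf.tsum_comm
    _ = ∑' k, (2 - (1/2 : ℝ) ^ (k + 1)) * g ^ (k + 1) := tsum_congr fun k => (hfiber k).tsum_eq
    _ = _ := (hasSum_two_sub_half_pow_mul_pow hg0 hg1).tsum_eq

lemma one_sub_firstPassageGF {z : ℝ} (hz0 : z ≠ 0) (hz1 : z ≤ 1) :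
    1 - firstPassageGF z = √(1 - z) * (√(1 + z) - √(1 - z)) / z := by
  have hprod : √(1 - z ^ 2) = √(1 - z) * √(1 + z) := by
    rw [← Real.sqrt_mul (by linarith)]; ring_nf
  have hsq : √(1 - z) ^ 2 = 1 - z := Real.sq_sqrt (by linarith)
  rw [firstPassageGF, hprod]
  field_simp
  linear_combination hsq

lemma tendsto_sqrt_one_sub_mul :
    Tendsto (fun z => √(1 - z) * (2 * firstPassageGF z / (1 - firstPassageGF z) -
      firstPassageGF z / (2 - firstPassageGF z))) (nhdsWithin 1 (Iio 1)) (nhds √2) := by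
  -- `√(1 - z) / (1 - firstPassageGF z) = z / (√(1 + z) - √(1 - z))` removes the singularity
  set G : ℝ → ℝ := fun z => 2 * firstPassageGF z * z / (√(1 + z) - √(1 - z)) -
    √(1 - z) * firstPassageGF z / (2 - firstPassageGF z)
  have hG : ContinuousAt G 1 := by
    simp only [G, firstPassageGF]
    fun_prop (disch := norm_num)
  have hG1 : G 1 = √2 := by
    simp only [G, firstPassageGF]
    norm_num
  refine ((hG1 ▸ hG.tendsto).mono_left nhdsWithin_le_nhds).congr' ?_
  filter_upwards [Ioo_mem_nhdsLT zero_lt_one] with z hz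
  have hu : 0 < √(1 - z) := Real.sqrt_pos.2 (by linarith [hz.2])
  have huv : √(1 - z) < √(1 + z) := Real.sqrt_lt_sqrt (by linarith [hz.2]) (by linarith [hz.1])
  have h2 : 2 - firstPassageGF z ≠ 0 := by
    have : 0 < 1 - firstPassageGF z := by
      rw [one_sub_firstPassageGF hz.1.ne' hz.2.le]
      exact div_pos (mul_pos hu (by linarith)) hz.1
    linarith
  simp only [G, mul_sub, one_sub_firstPassageGF hz.1.ne' hz.2.le]
  field_simp

theorem hata_cn_generating_function_general (P : Measure Om)
    (hP : ∀ (n : ℕ) (f : ℕ → Bool), P {ω : Om | ∀ i < n, ω i = f i} = (1/2 : ℝ≥0∞)^n) :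
    (∀ z : ℝ, z ∈ Set.Ioo (0:ℝ) 1 → ∀ w : ℝ,
      w = 1 - (1 - Real.sqrt (1 - z^2)) / z →
      ∑' n : ℕ, cReal P (n+1) * z^(n+1) = 2*(1-w)/w - (1-w)/(1+w))
    ∧ Tendsto (fun z : ℝ => Real.sqrt (1-z) * ∑' n : ℕ, cReal P (n+1) * z^(n+1))
        (nhdsWithin 1 (Set.Iio 1)) (nhds (Real.sqrt 2)) := by
  have hfair : IsFairCoin P := hP
  have hgen : ∀ z ∈ Ioo (0 : ℝ) 1, ∑' n, cReal P (n + 1) * z ^ (n + 1) =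
      2 * firstPassageGF z / (1 - firstPassageGF z) - firstPassageGF z / (2 - firstPassageGF z) :=
    fun z hz => by rw [hfair.tsum_cReal_mul_pow hz, hfair.hitGF_one_eq_firstPassageGF hz]
  refine ⟨fun z hz w hw => ?_, tendsto_sqrt_one_sub_mul.congr' ?_⟩
  · rw [hgen z hz, show firstPassageGF z = 1 - w by rw [hw, firstPassageGF]; ring]
    ring
  · filter_upwards [Ioo_mem_nhdsLT zero_lt_one] with z hz
    rw [hgen z hz]

/-- For `0 < z < 1`, `∑_{n≥1} c_n z^n = 2(1-w)/w − (1-w)/(1+w)` where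
`w = 1 − (1−√(1−z²))/z`, and consequently `√(1-z)·∑_{n≥1} c_n z^n → √2` as `z ↑ 1`. -/
theorem hata_cn_generating_function (P : Measure Om) [IsProbabilityMeasure P]
    (hP : ∀ (n : ℕ) (f : ℕ → Bool), P {ω : Om | ∀ i < n, ω i = f i} = (1/2 : ℝ≥0∞)^n) :
    (∀ z : ℝ, z ∈ Set.Ioo (0:ℝ) 1 → ∀ w : ℝ,
      w = 1 - (1 - Real.sqrt (1 - z^2)) / z →
      ∑' n : ℕ, cReal P (n+1) * z^(n+1) = 2*(1-w)/w - (1-w)/(1+w))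
    ∧ Tendsto (fun z : ℝ => Real.sqrt (1-z) * ∑' n : ℕ, cReal P (n+1) * z^(n+1))
        (nhdsWithin 1 (Set.Iio 1)) (nhds (Real.sqrt 2)) :=
  hata_cn_generating_function_general P hP

end
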